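/- In the starting Latin cube L of order n=2t, for every row R_{i1,k1} = {(i1,j,k1) : 1 ≤ j ≤ n} and every index k2 there exists a unique index i2 such that L(i1,x,k1) = L(i2,x,k2) for all x ∈ {1,...,n}; symmetrically, for every i2 there is a unique k2 with this property. -/

import Mathlib

/-- The representative of `x` modulo `t` in `{1, ..., t}`. -/
def rmod (t : ℕ) (x : ℤ) : ℤ := (x - 1) % t + 1

/-- The starting Latin cube of order `2*t`. -/
def SLC (t : ℕ) (i j k : ℤ) : ℤ :=
  if (i ≤ t ∧ j ≤ t ∧ k ≤ t) ∨ ((t:ℤ) < i ∧ (t:ℤ) < k ∧ j ≤ t) then rmod t (j - i + k)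
  else if ((t:ℤ) < i ∧ (t:ℤ) < j ∧ k ≤ t) ∨ ((t:ℤ) < j ∧ (t:ℤ) < k ∧ i ≤ t) then rmod t (i - j + k)
  else if (i ≤ t ∧ k ≤ t ∧ (t:ℤ) < j) ∨ ((t:ℤ) < i ∧ (t:ℤ) < j ∧ (t:ℤ) < k) then rmod t (j - i + k) + t
  else rmod t (i - j + k) + t

/-!
If `i` and `k` lie in the same half of `{1, …, 2t}`, the row `x ↦ L(i, x, k)` is `x + (k - i)`
modulo `t`; otherwise it is `(i + k) - x` modulo `t`; in both cases shifted by `t` on one half of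
the row, and the two kinds of rows already differ at `x = 1`. So a row is determined by its kind and
by `k - i`, resp. `i + k`, modulo `t`. Once `k₂` (or `i₂`) is fixed, this prescribes the half and the
residue modulo `t` of the missing index, and exactly one element of `{1, …, 2t}` has both.
-/

lemma rmod_pos (t : ℕ) (ht : 1 ≤ t) (a : ℤ) : 1 ≤ rmod t a := by
  have := Int.emod_nonneg (a - 1) (by omega : (t : ℤ) ≠ 0)
  unfold rmod
  omega

lemma rmod_le (t : ℕ) (ht : 1 ≤ t) (a : ℤ) : rmod t a ≤ t := by
  have := Int.emod_lt_of_pos (a - 1) (by omega : (0 : ℤ) < t)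
  unfold rmod
  omega

lemma rmod_modEq (t : ℕ) (a : ℤ) : rmod t a ≡ a [ZMOD t] := by
  simpa [rmod] using (Int.mod_modEq (a - 1) t).add_right 1

lemma rmod_eq_rmod_iff (t : ℕ) (a b : ℤ) : rmod t a = rmod t b ↔ a ≡ b [ZMOD t] := by
  refine ⟨fun h => ?_, fun h => ?_⟩
  · exact (rmod_modEq t a).symm.trans (h ▸ rmod_modEq t b)
  · unfold rmod
    rw [h.sub_right 1]

def SameHalf (t : ℕ) (a b : ℤ) : Prop := a ≤ t ↔ b ≤ t

lemma sameHalf_comm {t : ℕ} {a b : ℤ} : SameHalf t a b ↔ SameHalf t b a := Iff.comm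

lemma not_sameHalf_iff {t : ℕ} {a b : ℤ} : ¬SameHalf t a b ↔ (a ≤ t ↔ t < b) := by
  unfold SameHalf
  omega

lemma SLC_of_sameHalf {t : ℕ} {i k : ℤ} (h : SameHalf t i k) (x : ℤ) :
    SLC t i x k = rmod t (x - i + k) + if x ≤ t then 0 else t := by
  unfold SameHalf at h
  unfold SLC
  split_ifs <;> first | (exfalso; omega) | ring

lemma SLC_of_not_sameHalf {t : ℕ} {i k : ℤ} (h : ¬SameHalf t i k) (x : ℤ) :
    SLC t i x k = rmod t (i - x + k) + if x ≤ t then t else 0 := by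
  unfold SameHalf at h
  unfold SLC
  split_ifs <;> first | (exfalso; omega) | ring

section Rows

variable {t : ℕ} (ht : 1 ≤ t) {i k i' k' : ℤ}
include ht

lemma row_eq_iff_of_sameHalf (h : SameHalf t i k) :
    (∀ x ∈ Finset.Icc (1:ℤ) (2*t), SLC t i x k = SLC t i' x k') ↔
      SameHalf t i' k' ∧ k - i ≡ k' - i' [ZMOD t] := by
  constructor
  · intro hrow
    have hone := hrow 1 (Finset.mem_Icc.mpr ⟨le_rfl, by omega⟩)
    rw [SLC_of_sameHalf h, if_pos (by omega)] at hone
    by_cases h' : SameHalf t i' k'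
    · rw [SLC_of_sameHalf h', if_pos (by omega), add_left_inj, rmod_eq_rmod_iff] at hone
      exact ⟨h', Int.ModEq.add_left_cancel' 1 (by convert hone using 1 <;> ring)⟩
    · rw [SLC_of_not_sameHalf h', if_pos (by omega)] at hone
      have := rmod_le t ht (1 - i + k)
      have := rmod_pos t ht (i' - 1 + k')
      omega
  · rintro ⟨h', hmod⟩ x -
    rw [SLC_of_sameHalf h, SLC_of_sameHalf h', (rmod_eq_rmod_iff t _ _).mpr]
    convert hmod.add_left x using 1 <;> ring

lemma row_eq_iff_of_not_sameHalf (h : ¬SameHalf t i k) :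
    (∀ x ∈ Finset.Icc (1:ℤ) (2*t), SLC t i x k = SLC t i' x k') ↔
      ¬SameHalf t i' k' ∧ i + k ≡ i' + k' [ZMOD t] := by
  constructor
  · intro hrow
    have hone := hrow 1 (Finset.mem_Icc.mpr ⟨le_rfl, by omega⟩)
    rw [SLC_of_not_sameHalf h, if_pos (by omega)] at hone
    by_cases h' : SameHalf t i' k'
    · rw [SLC_of_sameHalf h', if_pos (by omega)] at hone
      have := rmod_pos t ht (i - 1 + k)
      have := rmod_le t ht (1 - i' + k')
      omega
    · rw [SLC_of_not_sameHalf h', if_pos (by omega), add_left_inj, rmod_eq_rmod_iff] at hone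
      exact ⟨h', Int.ModEq.add_right_cancel' (-1) (by convert hone using 1 <;> ring)⟩
  · rintro ⟨h', hmod⟩ x -
    rw [SLC_of_not_sameHalf h, SLC_of_not_sameHalf h', (rmod_eq_rmod_iff t _ _).mpr]
    convert hmod.sub_right x using 1 <;> ring

end Rows

lemma existsUnique_mem_Icc_half_modEq {t : ℕ} (ht : 1 ≤ t) (P : Prop) (c : ℤ) :
    ∃! y, y ∈ Finset.Icc (1:ℤ) (2*t) ∧ (y ≤ t ↔ P) ∧ y ≡ c [ZMOD t] := by
  refine existsUnique_of_exists_of_unique ?_ ?_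
  · have := rmod_pos t ht c
    have := rmod_le t ht c
    by_cases hP : P
    · exact ⟨rmod t c, Finset.mem_Icc.mpr ⟨by omega, by omega⟩, iff_of_true (by omega) hP,
        rmod_modEq t c⟩
    · exact ⟨rmod t c + t, Finset.mem_Icc.mpr ⟨by omega, by omega⟩, iff_of_false (by omega) hP,
        Int.add_modulus_modEq_iff.mpr (rmod_modEq t c)⟩
  · rintro y y' ⟨hy, hyP, hyc⟩ ⟨hy', hy'P, hy'c⟩
    rw [Finset.mem_Icc] at hy hy'
    have hhalf : y ≤ t ↔ y' ≤ t := hyP.trans hy'P.symm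
    have hdvd : (t : ℤ) ∣ y - y' := (hy'c.trans hyc.symm).dvd
    have hlt : |y - y'| < t := abs_lt.mpr ⟨by omega, by omega⟩
    exact sub_eq_zero.mp (Int.eq_zero_of_abs_lt_dvd hdvd hlt)

theorem starting_latin_cube_row_blocks_general (t : ℕ) (ht : 1 ≤ t)
    (i₁ k₁ : ℤ) :
    (∀ k₂ ∈ Finset.Icc (1:ℤ) (2*t),
      ∃! i₂, i₂ ∈ Finset.Icc (1:ℤ) (2*t) ∧
        ∀ x ∈ Finset.Icc (1:ℤ) (2*t), SLC t i₁ x k₁ = SLC t i₂ x k₂) ∧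
    (∀ i₂ ∈ Finset.Icc (1:ℤ) (2*t),
      ∃! k₂, k₂ ∈ Finset.Icc (1:ℤ) (2*t) ∧
        ∀ x ∈ Finset.Icc (1:ℤ) (2*t), SLC t i₁ x k₁ = SLC t i₂ x k₂) := by
  refine ⟨fun k₂ _ => ?_, fun i₂ _ => ?_⟩ <;> by_cases h : SameHalf t i₁ k₁
  · refine (existsUnique_congr fun y => and_congr_right' ?_).mpr
      (existsUnique_mem_Icc_half_modEq ht (k₂ ≤ t) (i₁ - k₁ + k₂))
    rw [row_eq_iff_of_sameHalf ht h, SameHalf, Int.modEq_iff_dvd, Int.modEq_iff_dvd]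
    ring_nf
  · refine (existsUnique_congr fun y => and_congr_right' ?_).mpr
      (existsUnique_mem_Icc_half_modEq ht (t < k₂) (i₁ + k₁ - k₂))
    rw [row_eq_iff_of_not_sameHalf ht h, not_sameHalf_iff, Int.modEq_comm, Int.modEq_iff_dvd,
      Int.modEq_iff_dvd]
    ring_nf
  · refine (existsUnique_congr fun y => and_congr_right' ?_).mpr
      (existsUnique_mem_Icc_half_modEq ht (i₂ ≤ t) (k₁ - i₁ + i₂))
    rw [row_eq_iff_of_sameHalf ht h, sameHalf_comm, SameHalf, Int.modEq_comm,
      Int.modEq_iff_dvd, Int.modEq_iff_dvd]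
    ring_nf
  · refine (existsUnique_congr fun y => and_congr_right' ?_).mpr
      (existsUnique_mem_Icc_half_modEq ht (t < i₂) (i₁ + k₁ - i₂))
    rw [row_eq_iff_of_not_sameHalf ht h, sameHalf_comm, not_sameHalf_iff, Int.modEq_comm,
      Int.modEq_iff_dvd, Int.modEq_iff_dvd]
    ring_nf

/-- In the starting Latin cube of order `n = 2t`: for every row `R_{i₁,k₁}` and every
index `k₂` there is a unique `i₂` with `L(i₁,x,k₁) = L(i₂,x,k₂)` for all `x`;
symmetrically, for every `i₂` there is a unique such `k₂`. -/
theorem starting_latin_cube_row_blocks (t : ℕ) (ht : 1 ≤ t)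
    (i₁ k₁ : ℤ) (hi₁ : i₁ ∈ Finset.Icc (1:ℤ) (2*t)) (hk₁ : k₁ ∈ Finset.Icc (1:ℤ) (2*t)) :
    (∀ k₂ ∈ Finset.Icc (1:ℤ) (2*t),
      ∃! i₂, i₂ ∈ Finset.Icc (1:ℤ) (2*t) ∧
        ∀ x ∈ Finset.Icc (1:ℤ) (2*t), SLC t i₁ x k₁ = SLC t i₂ x k₂) ∧
    (∀ i₂ ∈ Finset.Icc (1:ℤ) (2*t),
      ∃! k₂, k₂ ∈ Finset.Icc (1:ℤ) (2*t) ∧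
        ∀ x ∈ Finset.Icc (1:ℤ) (2*t), SLC t i₁ x k₁ = SLC t i₂ x k₂) :=
  starting_latin_cube_row_blocks_general t ht i₁ k₁
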